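/- If {u,v} and {u',v'} are positively oriented orthonormal bases of the same oriented 2-plane in the imaginary octonions, then u × v = u' × v'. Hence the assignment σ₂(u ∧ v) = u × v is a well-defined map from the Grassmannian of oriented 2-planes in ℝ^7 to the unit sphere of ℝ^7, with u × v orthogonal to the plane spanned by u and v. -/

import Mathlib

/-!
On imaginary octonions the double cross product is bilinear and alternating, so replacing a
basis `(u, v)` by `(a u + b v, c u + d v)` multiplies `u × v` by the determinant `a d - b c`,
which is `1` for a rotation. The remaining claims are identities of the multiplication table:
`|x y| = |x| |y|`, `⟨x y, x⟩ = |x|² y₀` and `(x y)₀ = 2 x₀ y₀ - ⟨x, y⟩`.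
-/

open scoped RealInnerProductSpace

noncomputable section

abbrev Oct : Type := EuclideanSpace ℝ (Fin 8)

def octe (i : Fin 8) : Oct := EuclideanSpace.single i 1

def plusTriples : List (Fin 8 × Fin 8 × Fin 8) :=
  [(1,2,3),(1,4,5),(1,7,6),(2,4,6),(2,5,7),(3,4,7),(3,6,5)]

/-- Completely skew-symmetric structure tensor taking the value `+1` on the
triples 123, 145, 176, 246, 257, 347, 365. -/
def eps (i j k : Fin 8) : ℝ :=
  if plusTriples.any (fun t => decide ((i,j,k) = t ∨ (i,j,k) = (t.2.1, t.2.2, t.1) ∨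
      (i,j,k) = (t.2.2, t.1, t.2.1))) then 1
  else if plusTriples.any (fun t => decide ((i,j,k) = (t.1, t.2.2, t.2.1) ∨
      (i,j,k) = (t.2.2, t.2.1, t.1) ∨ (i,j,k) = (t.2.1, t.1, t.2.2))) then -1
  else 0

/-- Structure constants of octonion multiplication:
`e_0 e_i = e_i e_0 = e_i` and `e_i e_j = -δ_ij e_0 + ε_ijk e_k` for `i,j ≥ 1`. -/
def structC (i j k : Fin 8) : ℝ :=
  if i = 0 then (if j = k then 1 else 0)
  else if j = 0 then (if i = k then 1 else 0)
  else (if i = j ∧ k = 0 then (-1:ℝ) else 0) + eps i j k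

/-- Octonion multiplication on ℝ⁸. -/
def octMul (x y : Oct) : Oct := WithLp.toLp 2 (fun k => ∑ i, ∑ j, x i * y j * structC i j k)

/-- Octonionic conjugation. -/
def octConj (x : Oct) : Oct := WithLp.toLp 2 (fun k => if k = 0 then x 0 else -(x k))

/-- The triple cross product `X(u,v,w) = -u(v̄w) + ⟨u,v⟩w + ⟨v,w⟩u - ⟨w,u⟩v`. -/
def X3 (u v w : Oct) : Oct :=
  -octMul u (octMul (octConj v) w) + ⟪u, v⟫ • w + ⟪v, w⟫ • u - ⟪w, u⟫ • v

/-- The double cross product `u × v = uv + ⟨u,v⟩ e_0` (on imaginary octonions). -/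
def cross2 (u v : Oct) : Oct := octMul u v + ⟪u, v⟫ • octe 0

theorem LinearMap.IsAlt.apply_smul_add_smul {R M N : Type*} [CommRing R] [AddCommGroup M]
    [Module R M] [AddCommGroup N] [Module R N] {B : M →ₗ[R] M →ₗ[R] N} (hB : B.IsAlt)
    (u v : M) (a b c d : R) :
    B (a • u + b • v) (c • u + d • v) = (a * d - b * c) • B u v := by
  simp only [map_add, map_smul, LinearMap.add_apply, LinearMap.smul_apply, hB.self_eq_zero,
    ← hB.neg u v, smul_zero]
  module

lemma octMul_apply0 (x y : Oct) : octMul x y 0 =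
    x 0 * y 0 - x 1 * y 1 - x 2 * y 2 - x 3 * y 3 -
      x 4 * y 4 - x 5 * y 5 - x 6 * y 6 - x 7 * y 7 := by
  simp +decide only [octMul, Fin.sum_univ_eight, structC, eps, plusTriples]
  norm_num
  ring

lemma octMul_apply1 (x y : Oct) : octMul x y 1 =
    x 0 * y 1 + x 1 * y 0 + x 2 * y 3 - x 3 * y 2 +
      x 4 * y 5 - x 5 * y 4 - x 6 * y 7 + x 7 * y 6 := by
  simp +decide only [octMul, Fin.sum_univ_eight, structC, eps, plusTriples]
  norm_num
  ring

lemma octMul_apply2 (x y : Oct) : octMul x y 2 =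
    x 0 * y 2 - x 1 * y 3 + x 2 * y 0 + x 3 * y 1 +
      x 4 * y 6 + x 5 * y 7 - x 6 * y 4 - x 7 * y 5 := by
  simp +decide only [octMul, Fin.sum_univ_eight, structC, eps, plusTriples]
  norm_num
  ring

lemma octMul_apply3 (x y : Oct) : octMul x y 3 =
    x 0 * y 3 + x 1 * y 2 - x 2 * y 1 + x 3 * y 0 +
      x 4 * y 7 - x 5 * y 6 + x 6 * y 5 - x 7 * y 4 := by
  simp +decide only [octMul, Fin.sum_univ_eight, structC, eps, plusTriples]
  norm_num
  ring

lemma octMul_apply4 (x y : Oct) : octMul x y 4 =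
    x 0 * y 4 - x 1 * y 5 - x 2 * y 6 - x 3 * y 7 +
      x 4 * y 0 + x 5 * y 1 + x 6 * y 2 + x 7 * y 3 := by
  simp +decide only [octMul, Fin.sum_univ_eight, structC, eps, plusTriples]
  norm_num
  ring

lemma octMul_apply5 (x y : Oct) : octMul x y 5 =
    x 0 * y 5 + x 1 * y 4 - x 2 * y 7 + x 3 * y 6 -
      x 4 * y 1 + x 5 * y 0 - x 6 * y 3 + x 7 * y 2 := by
  simp +decide only [octMul, Fin.sum_univ_eight, structC, eps, plusTriples]
  norm_num
  ring

lemma octMul_apply6 (x y : Oct) : octMul x y 6 =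
    x 0 * y 6 + x 1 * y 7 + x 2 * y 4 - x 3 * y 5 -
      x 4 * y 2 + x 5 * y 3 + x 6 * y 0 - x 7 * y 1 := by
  simp +decide only [octMul, Fin.sum_univ_eight, structC, eps, plusTriples]
  norm_num
  ring

lemma octMul_apply7 (x y : Oct) : octMul x y 7 =
    x 0 * y 7 - x 1 * y 6 + x 2 * y 5 + x 3 * y 4 -
      x 4 * y 3 - x 5 * y 2 + x 6 * y 1 + x 7 * y 0 := by
  simp +decide only [octMul, Fin.sum_univ_eight, structC, eps, plusTriples]
  norm_num
  ring

lemma oct_inner_eq (x y : Oct) : ⟪x, y⟫ =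
    x 0 * y 0 + x 1 * y 1 + x 2 * y 2 + x 3 * y 3 +
      x 4 * y 4 + x 5 * y 5 + x 6 * y 6 + x 7 * y 7 := by
  simp only [PiLp.inner_apply, RCLike.inner_apply, conj_trivial, Fin.sum_univ_eight]
  ring

lemma octMul_apply_zero_eq (x y : Oct) : octMul x y 0 = 2 * x 0 * y 0 - ⟪x, y⟫ := by
  rw [octMul_apply0, oct_inner_eq]
  ring

lemma octMul_self (x : Oct) : octMul x x = (2 * x 0) • x - ⟪x, x⟫ • octe 0 := by
  ext k
  fin_cases k <;>
    simp only [octe, Fin.reduceFinMk, Fin.zero_eta, PiLp.sub_apply, PiLp.smul_apply,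
      smul_eq_mul, PiLp.single_apply, Fin.reduceEq, if_true, if_false, oct_inner_eq,
      octMul_apply0, octMul_apply1, octMul_apply2, octMul_apply3, octMul_apply4, octMul_apply5,
      octMul_apply6, octMul_apply7] <;>
    ring

lemma inner_self_octMul (x y : Oct) : ⟪octMul x y, octMul x y⟫ = ⟪x, x⟫ * ⟪y, y⟫ := by
  simp only [oct_inner_eq, octMul_apply0, octMul_apply1, octMul_apply2, octMul_apply3,
    octMul_apply4, octMul_apply5, octMul_apply6, octMul_apply7]
  ring

lemma inner_octMul_left (x y : Oct) : ⟪octMul x y, x⟫ = ⟪x, x⟫ * y 0 := by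
  simp only [oct_inner_eq, octMul_apply0, octMul_apply1, octMul_apply2, octMul_apply3,
    octMul_apply4, octMul_apply5, octMul_apply6, octMul_apply7]
  ring

lemma inner_octMul_right (x y : Oct) : ⟪octMul x y, y⟫ = ⟪y, y⟫ * x 0 := by
  simp only [oct_inner_eq, octMul_apply0, octMul_apply1, octMul_apply2, octMul_apply3,
    octMul_apply4, octMul_apply5, octMul_apply6, octMul_apply7]
  ring

lemma norm_octMul (x y : Oct) : ‖octMul x y‖ = ‖x‖ * ‖y‖ := by
  rw [← sq_eq_sq₀ (norm_nonneg _) (by positivity), mul_pow]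
  simp only [← real_inner_self_eq_norm_sq, inner_self_octMul]

lemma octMul_add_left (x y z : Oct) : octMul (x + y) z = octMul x z + octMul y z := by
  ext k
  simp [octMul, add_mul, Finset.sum_add_distrib]

lemma octMul_add_right (x y z : Oct) : octMul x (y + z) = octMul x y + octMul x z := by
  ext k
  simp [octMul, add_mul, mul_add, Finset.sum_add_distrib]

lemma octMul_smul_left (a : ℝ) (x y : Oct) : octMul (a • x) y = a • octMul x y := by
  ext k
  simp [octMul, Finset.mul_sum, mul_assoc]

lemma octMul_smul_right (a : ℝ) (x y : Oct) : octMul x (a • y) = a • octMul x y := by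
  ext k
  simp [octMul, Finset.mul_sum, mul_assoc, mul_left_comm]

def cross2ₗ : Oct →ₗ[ℝ] Oct →ₗ[ℝ] Oct :=
  LinearMap.mk₂ ℝ cross2
    (fun x y z => by simp only [cross2, octMul_add_left, inner_add_left, add_smul]; abel)
    (fun a x y => by
      simp only [cross2, octMul_smul_left, real_inner_smul_left, smul_add, smul_smul])
    (fun x y z => by simp only [cross2, octMul_add_right, inner_add_right, add_smul]; abel)
    (fun a x y => by
      simp only [cross2, octMul_smul_right, real_inner_smul_right, smul_add, smul_smul])

lemma cross2ₗ_apply (x y : Oct) : cross2ₗ x y = cross2 x y := rfl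

def imOct : Submodule ℝ Oct :=
  LinearMap.ker (EuclideanSpace.proj (0 : Fin 8) : Oct →L[ℝ] ℝ).toLinearMap

lemma cross2_apply_zero (x y : Oct) : cross2 x y 0 = 2 * x 0 * y 0 := by
  simp [cross2, octe, octMul_apply_zero_eq]

lemma cross2_self (x : Oct) : cross2 x x = (2 * x 0) • x := by
  rw [cross2, octMul_self, sub_add_cancel]

lemma isAlt_cross2ₗ_imOct : (cross2ₗ.compl₁₂ imOct.subtype imOct.subtype).IsAlt := by
  rintro ⟨x, hx : x 0 = 0⟩
  change cross2 x x = 0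
  rw [cross2_self, hx, mul_zero, zero_smul]

lemma inner_cross2_left (x y : Oct) :
    ⟪cross2 x y, x⟫ = ⟪x, x⟫ * y 0 + ⟪x, y⟫ * x 0 := by
  simp [cross2, octe, inner_add_left, real_inner_smul_left, inner_octMul_left,
    EuclideanSpace.inner_single_left]

lemma inner_cross2_right (x y : Oct) :
    ⟪cross2 x y, y⟫ = ⟪y, y⟫ * x 0 + ⟪x, y⟫ * y 0 := by
  simp [cross2, octe, inner_add_left, real_inner_smul_left, inner_octMul_right,
    EuclideanSpace.inner_single_left]

lemma norm_cross2_of_inner_eq_zero {x y : Oct} (h : ⟪x, y⟫ = 0) :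
    ‖cross2 x y‖ = ‖x‖ * ‖y‖ := by
  rw [cross2, h, zero_smul, add_zero, norm_octMul]

/-- Well-definedness on oriented 2-planes is expressed as invariance of `u × v` under rotating
the orthonormal basis `(u, v)` within its plane. -/
theorem stmt6 (u v : Oct) (hu0 : u 0 = 0) (hv0 : v 0 = 0)
    (hu : ‖u‖ = 1) (hv : ‖v‖ = 1) (huv : ⟪u, v⟫ = 0) :
    (∀ θ : ℝ, cross2 (Real.cos θ • u + Real.sin θ • v)
        (-Real.sin θ • u + Real.cos θ • v) = cross2 u v) ∧
    ‖cross2 u v‖ = 1 ∧ ⟪cross2 u v, u⟫ = 0 ∧ ⟪cross2 u v, v⟫ = 0 ∧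
    (cross2 u v) 0 = 0 := by
  refine ⟨fun θ => ?_, by rw [norm_cross2_of_inner_eq_zero huv, hu, hv, one_mul],
    by simp [inner_cross2_left, hu0, hv0], by simp [inner_cross2_right, hu0, hv0],
    by simp [cross2_apply_zero, hu0]⟩
  have h := isAlt_cross2ₗ_imOct.apply_smul_add_smul ⟨u, hu0⟩ ⟨v, hv0⟩
    (Real.cos θ) (Real.sin θ) (-Real.sin θ) (Real.cos θ)
  simpa only [LinearMap.compl₁₂_apply, Submodule.subtype_apply, Submodule.coe_add,
    Submodule.coe_smul, cross2ₗ_apply, mul_neg, sub_neg_eq_add, ← sq, Real.cos_sq_add_sin_sq,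
    one_smul] using h
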